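/- If G is a hamiltonian threshold graph of order n ≥ 4 with degree partition D_1, ..., D_m that minimizes the number of Hamilton cycles among all hamiltonian threshold graphs of order n, then |D_m| = 2. -/

import Mathlib

open SimpleGraph Finset

/-- A threshold graph: there exist a nonnegative vertex weight function and a
nonnegative threshold `t` such that distinct vertices are adjacent iff the sum
of their weights exceeds `t`. -/
def SimpleGraph.IsThreshold {V : Type} (G : SimpleGraph V) : Prop :=
  ∃ (f : V → ℝ) (t : ℝ), (∀ v, 0 ≤ f v) ∧ 0 ≤ t ∧
    ∀ u v : V, u ≠ v → (G.Adj u v ↔ f u + f v > t)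

/-- Degree of a vertex (no decidability assumptions). -/
noncomputable def SimpleGraph.deg {V : Type} [Fintype V] (G : SimpleGraph V) (v : V) : ℕ :=
  Nat.card {u // G.Adj v u}

/-- `δ 0 = 0 < δ 1 < ⋯ < δ m` are exactly the degrees occurring in `G`;
the degree partition of `G` is `D_i = {v : deg v = δ i}`, `i = 0, …, m`. -/
structure SimpleGraph.DegreePartition {V : Type} [Fintype V] (G : SimpleGraph V)
    (m : ℕ) (δ : ℕ → ℕ) : Prop where
  zero : δ 0 = 0
  mono : ∀ i j, i < j → j ≤ m → δ i < δ j
  cover : ∀ v : V, ∃ i ≤ m, G.deg v = δ i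
  attained : ∀ i, 1 ≤ i → i ≤ m → ∃ v : V, G.deg v = δ i

/-- The degree set `D_i` of the degree partition. -/
noncomputable def SimpleGraph.Dset {V : Type} [Fintype V] (G : SimpleGraph V)
    (δ : ℕ → ℕ) (i : ℕ) : Finset V :=
  Finset.univ.filter (fun v => G.deg v = δ i)

/-- A key edge of a threshold graph with degree partition `D_0, …, D_m`: an edge
joining `D_k` and `D_{m+1-k}` for some `1 ≤ k ≤ ⌈m/2⌉`. -/
def SimpleGraph.IsKeyEdge {V : Type} [Fintype V] (G : SimpleGraph V)
    (m : ℕ) (δ : ℕ → ℕ) (e : Sym2 V) : Prop :=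
  e ∈ G.edgeSet ∧ ∃ x y k, e = s(x, y) ∧ 1 ≤ k ∧ k ≤ (m + 1) / 2 ∧
    G.deg x = δ k ∧ G.deg y = δ (m + 1 - k)

/-- The number of Hamilton cycles of `G`, counted as unordered spanning cycles
(a cycle is identified with its edge set). -/
noncomputable def SimpleGraph.hamCycleCount {V : Type} [Fintype V] [DecidableEq V]
    (G : SimpleGraph V) : ℕ :=
  Nat.card {s : Finset (Sym2 V) // ∃ (v : V) (w : G.Walk v v),
    w.IsHamiltonianCycle ∧ w.edges.toFinset = s}

/-- The multiset of degrees of `G`. -/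
noncomputable def SimpleGraph.degMultiset {V : Type} [Fintype V] (G : SimpleGraph V) :
    Multiset ℕ :=
  Finset.univ.val.map G.deg

/-- The degree sequence `n-1, n-1, n-2, …, ⌈n/2⌉, ⌈n/2⌉, …, 3, 2` of the graph `Gₙ`,
as a multiset: the values `2, …, n-1` together with an extra copy of `⌈n/2⌉` and of `n-1`. -/
def gnDegSeq (n : ℕ) : Multiset ℕ :=
  (Multiset.range (n - 2)).map (· + 2) + {(n + 1) / 2, n - 1}

/-- An independent set in a graph. -/
def SimpleGraph.IsIndepSet' {V : Type} (G : SimpleGraph V) (S : Set V) : Prop :=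
  ∀ u ∈ S, ∀ v ∈ S, u ≠ v → ¬ G.Adj u v

/-
Realise `G` by weights `f` and a threshold `t`, and let `v` be a vertex of minimum weight. Every
neighbour of `v` is universal, so on a Hamilton cycle `v u ⋯ b v` both `u` and `b` lie in `D_m`,
which is the class of universal vertices. A third universal vertex `w ∉ {v, u, b}` allows the
2-opt move `v u ⋯ w x ⋯ b v ↦ v w ⋯ u x ⋯ b v`, a Hamilton cycle avoiding `vu`. Lowering the
weights of `u` and `v` shows that `G - vu` is still a threshold graph; it is hamiltonian and has
strictly fewer Hamilton cycles than `G`, contradicting minimality.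
-/

theorem exists_pos_forall_lt_of_pos {ι : Type*} [Finite ι] (a : ι → ℝ) :
    ∃ ε > 0, ∀ i, 0 < a i → ε < a i := by
  have hev : ∀ᶠ ε in nhds (0 : ℝ), ∀ i, 0 < a i → ε < a i :=
    Filter.eventually_all.2 fun i => by
      by_cases hi : 0 < a i
      · exact (eventually_lt_nhds hi).mono fun ε hε _ => hε
      · exact .of_forall fun ε h => absurd h hi
  obtain ⟨ε, hlt, hpos⟩ :=
    ((hev.filter_mono nhdsWithin_le_nhds).and (self_mem_nhdsWithin (s := Set.Ioi 0))).exists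
  exact ⟨ε, hpos, hlt⟩

namespace SimpleGraph

variable {V : Type} {G : SimpleGraph V}

def IsThresholdWith (G : SimpleGraph V) (f : V → ℝ) (t : ℝ) : Prop :=
  ∀ u v, u ≠ v → (G.Adj u v ↔ f u + f v > t)

theorem IsThresholdWith.isThreshold [Finite V] {f : V → ℝ} {t : ℝ} (h : G.IsThresholdWith f t) :
    G.IsThreshold := by
  obtain ⟨a, ha⟩ := (Set.finite_range f).bddBelow
  refine ⟨fun z => f z + |a| + |t|, t + 2 * (|a| + |t|), fun z => ?_, ?_, fun u v huv => ?_⟩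
  · have := ha (Set.mem_range_self z)
    have := neg_abs_le a
    have := abs_nonneg t
    linarith
  · linarith [neg_abs_le t, abs_nonneg t, abs_nonneg a]
  · rw [h u v huv]
    constructor <;> intro <;> linarith

namespace IsThresholdWith

variable {f : V → ℝ} {t : ℝ} {u v : V}

theorem isUniversal_of_adj (h : G.IsThresholdWith f t) (hv : ∀ z, f v ≤ f z) (hvu : G.Adj v u) :
    G.IsUniversal u := by
  intro z huz
  have := (h v u hvu.ne).1 hvu
  exact (h u z huz).2 (by linarith [hv z])

/-- Lowering `f v` by `ε` and `f u` by the rest of the slack `f v + f u - t` removes exactly the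
edge `vu`: `ε` lies below every positive slack `f x + f y - t`, and `u` keeps its other edges
because every vertex weighs at least `f v`. -/
theorem deleteEdges [Finite V] (h : G.IsThresholdWith f t) (hv : ∀ z, f v ≤ f z)
    (hvu : G.Adj v u) : ∃ g : V → ℝ, (G.deleteEdges {s(v, u)}).IsThresholdWith g t := by
  classical
  obtain ⟨ε, hε, hslack⟩ := exists_pos_forall_lt_of_pos fun p : V × V => f p.1 + f p.2 - t
  have huv := (h v u hvu.ne).1 hvu
  have hεuv := hslack (v, u) (by simpa using huv)
  refine ⟨fun z => f z - (if z = v then ε else 0) - (if z = u then f v + f u - t - ε else 0),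
    fun x y hxy => ?_⟩
  have hne := hvu.ne
  have hxy_slack : f x + f y ≤ t ∨ ε < f x + f y - t := by
    by_cases hgt : t < f x + f y
    · exact .inr (hslack (x, y) (by simpa using hgt))
    · exact .inl (not_lt.1 hgt)
  have := hv x
  have := hv y
  rw [deleteEdges_adj, h x y hxy]
  by_cases hxv : x = v <;> by_cases hxu : x = u <;> by_cases hyv : y = v <;> by_cases hyu : y = u <;>
    subst_vars <;> simp [*] <;> (try exact absurd rfl hxy) <;> (try exact absurd rfl hne) <;>
    rcases hxy_slack with h' | h' <;> (try constructor) <;> (try intro) <;> linarith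

end IsThresholdWith

namespace Walk

variable [DecidableEq V] {a u v w x : V}

theorem IsHamiltonianCycle.toDeleteEdge {c : G.Walk a a} (hc : c.IsHamiltonianCycle)
    {e : Sym2 V} (he : e ∉ c.edges) : (c.toDeleteEdge e he).IsHamiltonianCycle := by
  rw [isHamiltonianCycle_iff_isCycle_and_support_count_tail_eq_one] at hc ⊢
  exact ⟨hc.1.transfer _, by simpa [support_transfer] using hc.2⟩

/-- The 2-opt move: in a hamiltonian cycle `v u ⋯ w x ⋯ v`, replace the edges `vu` and `wx`
by `vw` and `ux`. -/
theorem IsHamiltonianCycle.twoOpt {hvu : G.Adj v u} {q₁ : G.Walk u w}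
    {hwx : G.Adj w x} {s : G.Walk x v}
    (hc : (cons hvu (q₁.append (cons hwx s))).IsHamiltonianCycle)
    (hvw : G.Adj v w) (hux : G.Adj u x) (hwu : w ≠ u) (hxv : x ≠ v) :
    ∃ c : G.Walk v v, c.IsHamiltonianCycle ∧ s(v, u) ∉ c.edges := by
  rw [isHamiltonianCycle_iff_isCycle_and_support_count_tail_eq_one] at hc
  have hsupp : (cons hvu (q₁.append (cons hwx s))).support.tail = q₁.support ++ s.support := by
    simp [support_append]
  have hnd := hsupp ▸ hc.1.support_nodup
  have hdisj := List.disjoint_of_nodup_append hnd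
  have hv : v ∉ q₁.support := fun h => hdisj h s.end_mem_support
  have hu : u ∉ s.support := hdisj q₁.start_mem_support
  have hw : w ∉ s.support := hdisj q₁.end_mem_support
  set r := q₁.reverse.append (cons hux s)
  have hperm : r.support.Perm (q₁.support ++ s.support) := by
    simpa [r, support_append] using (List.reverse_perm _).append_right s.support
  have hedges : ∀ y z, s(y, z) ∈ r.edges ↔ s(y, z) ∈ q₁.edges ∨ s(y, z) = s(u, x) ∨
      s(y, z) ∈ s.edges := by
    simp [r, edges_append]
  refine ⟨cons hvw r, ?_, ?_⟩
  · rw [isHamiltonianCycle_iff_isCycle_and_support_count_tail_eq_one, cons_isCycle_iff]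
    refine ⟨⟨IsPath.mk' (hperm.nodup_iff.2 hnd), ?_⟩, fun z => ?_⟩
    · rw [hedges, Sym2.eq_iff]
      rintro (h | (⟨rfl, -⟩ | ⟨rfl, -⟩) | h)
      · exact hv (q₁.fst_mem_support_of_mem_edges h)
      · exact hvu.ne rfl
      · exact hxv rfl
      · exact hw (s.snd_mem_support_of_mem_edges h)
    · rw [support_cons, List.tail_cons, hperm.count_eq, ← hsupp]
      exact hc.2 z
  · rw [edges_cons, List.mem_cons, hedges, Sym2.eq_iff, Sym2.eq_iff]
    rintro ((⟨-, huw⟩ | ⟨-, huv⟩) | h | (⟨hvu', -⟩ | ⟨hvx, -⟩) | h)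
    · exact hwu huw.symm
    · exact hvu.ne huv.symm
    · exact hv (q₁.fst_mem_support_of_mem_edges h)
    · exact hvu.ne hvu'
    · exact hxv hvx.symm
    · exact hu (s.snd_mem_support_of_mem_edges h)

theorem IsHamiltonianCycle.exists_not_mem_edges_of_isUniversal {hvu : G.Adj v u}
    {q : G.Walk u v} (hc : (cons hvu q).IsHamiltonianCycle) (hu : G.IsUniversal u)
    (hvw : G.Adj v w) (hwu : w ≠ u) (hwb : w ≠ q.penultimate) :
    ∃ c : G.Walk v v, c.IsHamiltonianCycle ∧ s(v, u) ∉ c.edges := by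
  have hw : w ∈ q.support := by simpa [hvw.ne.symm] using hc.mem_support w
  obtain ⟨x, hwx, s, hs⟩ := not_nil_iff.1 (not_nil_of_ne (p := q.dropUntil w hw) hvw.ne.symm)
  have hq : q = (q.takeUntil w hw).append (cons hwx s) := by rw [← hs, take_spec]
  have hqp : q.IsPath := ((cons_isCycle_iff _ _).1 hc.isCycle).1
  rw [hq] at hc hqp hwb
  have hnd : ((q.takeUntil w hw).support ++ s.support).Nodup := by
    simpa [support_append] using hqp.support_nodup
  have hux : u ≠ x := fun h => List.disjoint_of_nodup_append hnd
    (q.takeUntil w hw).start_mem_support (h ▸ s.start_mem_support)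
  refine hc.twoOpt hvw (hu hux) hwu ?_
  rintro rfl
  obtain rfl : s = nil := (isPath_iff_nil.1 hqp.of_append_right.of_cons).eq_nil
  exact hwb (by simpa [concat_eq_append] using (penultimate_concat _ hwx).symm)

end Walk

section Fintype

variable [Fintype V]

theorem hamCycleCount_lt_of_le [DecidableEq V] {H : SimpleGraph V} (hle : H ≤ G) {a : V}
    {c : G.Walk a a} (hc : c.IsHamiltonianCycle) {e : Sym2 V} (he : e ∈ c.edges)
    (heH : e ∉ H.edgeSet) : H.hamCycleCount < G.hamCycleCount := by
  rw [hamCycleCount, hamCycleCount, ← Set.coe_ofPred, ← Set.coe_ofPred, Nat.card_coe_set_eq,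
    Nat.card_coe_set_eq]
  refine Set.ncard_lt_ncard ⟨?_, fun hsub => ?_⟩
  · rintro _ ⟨b, p, hp, rfl⟩
    exact ⟨b, p.mapLe hle, hp.map Function.bijective_id, by simp⟩
  · obtain ⟨b, p, -, hp⟩ := hsub ⟨a, c, hc, rfl⟩
    exact heH (p.edges_subset_edgeSet (List.mem_toFinset.1 (hp ▸ List.mem_toFinset.2 he)))

theorem deg_eq_degree [DecidableRel G.Adj] (v : V) : G.deg v = G.degree v := by
  rw [deg, ← card_neighborSet_eq_degree, ← Nat.card_eq_fintype_card]
  rfl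

theorem deg_eq_card_sub_one_iff {v : V} : G.deg v = Fintype.card V - 1 ↔ G.IsUniversal v := by
  classical
  rw [deg_eq_degree, degree_eq_card_sub_one]

theorem deg_le_card_sub_one (v : V) : G.deg v ≤ Fintype.card V - 1 := by
  classical
  have := G.degree_lt_card_verts v
  rw [deg_eq_degree]
  omega

theorem DegreePartition.mem_Dset_iff_isUniversal {m : ℕ} {δ : ℕ → ℕ}
    (hdp : G.DegreePartition m δ) {u : V} (hu : G.IsUniversal u) (z : V) :
    z ∈ G.Dset δ m ↔ G.IsUniversal z := by
  have htop : δ m = Fintype.card V - 1 := by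
    obtain ⟨i, him, hi⟩ := hdp.cover u
    rw [deg_eq_card_sub_one_iff.2 hu] at hi
    rcases him.lt_or_eq with him | rfl
    · obtain ⟨y, hy⟩ := hdp.attained m (by omega) le_rfl
      have := hdp.mono i m him le_rfl
      have := G.deg_le_card_sub_one y
      omega
    · exact hi.symm
  simp [Dset, htop, deg_eq_card_sub_one_iff]

theorem IsThresholdWith.exists_isUniversal_ne [DecidableEq V] {f : V → ℝ} {t : ℝ} {v : V}
    (h : G.IsThresholdWith f t) (hv : ∀ z, f v ≤ f z) (hcard : 4 ≤ Fintype.card V)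
    {s : Finset V} (hs : ∀ z, z ∈ s ↔ G.IsUniversal z) (h3 : 2 < #s) (a b : V) :
    ∃ w, G.IsUniversal w ∧ w ≠ v ∧ w ≠ a ∧ w ≠ b := by
  have herase : 2 < #(s.erase v) := by
    by_cases hvs : v ∈ s
    · have hall : s = univ := eq_univ_of_forall fun z => by
        rcases eq_or_ne v z with rfl | hvz
        · exact hvs
        · exact (hs z).2 (h.isUniversal_of_adj hv ((hs v).1 hvs hvz))
      rw [hall, card_erase_of_mem (mem_univ v), card_univ]
      omega
    · rwa [erase_eq_of_notMem hvs]
  obtain ⟨w, hw, hwab⟩ := exists_mem_notMem_of_card_lt_card (card_le_two.trans_lt herase)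
  obtain ⟨hwv, hws⟩ := mem_erase.1 hw
  obtain ⟨hwa, hwb⟩ : w ≠ a ∧ w ≠ b := by simpa using hwab
  exact ⟨w, (hs w).1 hws, hwv, hwa, hwb⟩

end Fintype

end SimpleGraph

open SimpleGraph.Walk in
/-- a hamiltonian threshold graph of order `n ≥ 4` minimizing the number of
Hamilton cycles among all hamiltonian threshold graphs of order `n` has `|D_m| = 2`. -/
theorem stmt8 {V : Type} [Fintype V] [DecidableEq V] (G : SimpleGraph V)
    (n m : ℕ) (δ : ℕ → ℕ) (hn : Fintype.card V = n) (hn4 : 4 ≤ n)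
    (hG : G.IsThreshold) (hham : G.IsHamiltonian) (hdp : G.DegreePartition m δ)
    (hmin : ∀ (W : Type) [Fintype W] [DecidableEq W] (H : SimpleGraph W),
      Fintype.card W = n → H.IsThreshold → H.IsHamiltonian →
      G.hamCycleCount ≤ H.hamCycleCount) :
    (G.Dset δ m).card = 2 := by
  obtain ⟨f, t, -, -, hft : G.IsThresholdWith f t⟩ := hG
  have : Nontrivial V := Fintype.one_lt_card_iff_nontrivial.1 (by omega)
  obtain ⟨v, hv⟩ := Finite.exists_min f
  obtain ⟨c, hc⟩ := hham.exists_isHamiltonianCycle v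
  obtain ⟨u, hvu, q, rfl⟩ := not_nil_iff.1 hc.isCycle.not_nil
  have hq : ¬q.Nil := not_nil_of_ne hvu.ne.symm
  have hub : u ≠ q.penultimate := by
    simpa [penultimate_cons_of_not_nil _ _ hq] using hc.isCycle.snd_ne_penultimate
  have hu := hft.isUniversal_of_adj hv hvu
  have hD := hdp.mem_Dset_iff_isUniversal hu
  refine le_antisymm ?_ (card_pair hub ▸ card_le_card ?_)
  · by_contra! h3
    obtain ⟨w, hw, hwv, hwu, hwb⟩ :=
      hft.exists_isUniversal_ne hv (hn ▸ hn4) hD h3 u q.penultimate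
    obtain ⟨c', hc', hcvu⟩ := hc.exists_not_mem_edges_of_isUniversal hu (hw hwv).symm hwu hwb
    obtain ⟨g, hg⟩ := hft.deleteEdges hv hvu
    have hlt := hamCycleCount_lt_of_le (G.deleteEdges_le {s(v, u)}) hc (e := s(v, u))
      (by simp) (by simp)
    exact hlt.not_ge (hmin V _ hn hg.isThreshold fun _ => ⟨v, _, hc'.toDeleteEdge hcvu⟩)
  · simp [insert_subset_iff, hD, hu, hft.isUniversal_of_adj hv (q.adj_penultimate hq).symm]
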